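/- arXiv:2107.02800 — 5 statements merged into one kernel-verified Lean document; each statement's English description precedes it below -/
import Mathlib

section
/- For every integer k ≥ 0 and every complex number z, the functions f_k satisfy the three-term recurrence f_k(z) − (1 + z/(k+1))·f_{k+1}(z) + (z/(k+2))·f_{k+2}(z) = 0. -/
/-! Splitting off the `r = 0` term of the series `S k z = Σ_r k! z^r / (r+k)!` gives the first-order
recurrence `S k = 1 + z/(k+1) · S (k+1)`, i.e. `f k = e^{-z} + z/(k+1) · f (k+1)`. Subtracting this
identity at `k+1` from the one at `k` eliminates `e^{-z}` and leaves the three-term recurrence. -/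

open scoped Nat

/-- `f k z = e^{-z} · ₁F₁(1; k+1; z) = e^{-z} · Σ_{r=0}^∞ k! z^r / (r+k)!`. -/
noncomputable def rieszF (k : ℕ) (z : ℂ) : ℂ :=
  Complex.exp (-z) * ∑' r : ℕ, (k ! : ℂ) * z ^ r / (r + k)!

lemma summable_factorial_mul_pow_div_factorial_add (k : ℕ) (z : ℂ) :
    Summable (fun r : ℕ => (k ! : ℂ) * z ^ r / (r + k)!) := by
  refine Summable.of_norm_bounded ((Real.summable_pow_div_factorial ‖z‖).mul_left (k ! : ℝ))
    fun r => ?_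
  rw [norm_div, norm_mul, norm_pow, Complex.norm_natCast, Complex.norm_natCast, mul_div_assoc]
  gcongr
  exact Nat.le_add_right r k

lemma factorial_mul_pow_succ_div_factorial_add (k r : ℕ) (z : ℂ) :
    (k ! : ℂ) * z ^ (r + 1) / (r + 1 + k)! =
      z / ((k : ℂ) + 1) * (((k + 1)! : ℂ) * z ^ r / (r + (k + 1))!) := by
  rw [show r + 1 + k = r + (k + 1) by omega, Nat.factorial_succ]
  have hk : ((k : ℂ) + 1) ≠ 0 := Nat.cast_add_one_ne_zero k
  push_cast
  field_simp
  ring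

lemma tsum_factorial_mul_pow_div_factorial_add_eq (k : ℕ) (z : ℂ) :
    ∑' r : ℕ, (k ! : ℂ) * z ^ r / (r + k)! =
      1 + z / ((k : ℂ) + 1) * ∑' r : ℕ, ((k + 1)! : ℂ) * z ^ r / (r + (k + 1))! := by
  have hk : (k ! : ℂ) ≠ 0 := Nat.cast_ne_zero.mpr (Nat.factorial_ne_zero k)
  simp only [(summable_factorial_mul_pow_div_factorial_add k z).tsum_eq_zero_add,
    factorial_mul_pow_succ_div_factorial_add, tsum_mul_left]
  simp [hk]

lemma rieszF_eq_exp_neg_add (k : ℕ) (z : ℂ) :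
    rieszF k z = Complex.exp (-z) + z / ((k : ℂ) + 1) * rieszF (k + 1) z := by
  unfold rieszF
  rw [tsum_factorial_mul_pow_div_factorial_add_eq]
  ring

theorem rieszF_three_term_recurrence (k : ℕ) (z : ℂ) :
    rieszF k z - (1 + z / ((k : ℂ) + 1)) * rieszF (k + 1) z
      + (z / ((k : ℂ) + 2)) * rieszF (k + 2) z = 0 := by
  have hk := rieszF_eq_exp_neg_add k z
  have hk₁ := rieszF_eq_exp_neg_add (k + 1) z
  push_cast [add_assoc, one_add_one_eq_two] at hk₁
  linear_combination hk - hk₁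
end

section
/- For every integer k ≥ 2 there exists a polynomial g_k with rational coefficients of degree k − 2 such that e_k(z)·e_k(−z) = 1 − z^k·g_k(z)/k! for all complex z; equivalently, for all real z ≥ 0, 1/e_k(z) = e_k(−z) + z^k·g_k(z)/(k!·e_k(z)). In particular g_2(z) = 2, g_3(z) = −(3/2)z, g_4(z) = 2 + (2/3)z², g_5(z) = −(5/3)z − (5/24)z³ and g_6(z) = 2 + (3/4)z² + (1/20)z⁴. -/
/-!
Since `e_k(X)` and `e_k(-X)` are the degree `< k` truncations of `exp X` and `exp (-X)`, whose
product is `1`, the polynomial `1 - e_k(X) e_k(-X)` has no coefficients below degree `k`. Its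
degree is `2k - 2`, with leading coefficient `(-1)^k/(k-1)!²`, so dividing by `X ^ k` leaves a
polynomial of degree `k - 2`.
-/

open scoped Nat
open Polynomial

noncomputable def expPartial {K : Type*} [DivisionRing K] (k : ℕ) (z : K) : K :=
  ∑ r ∈ Finset.range k, z ^ r / r !

namespace PowerSeries

variable {R : Type*}

theorem X_pow_dvd_one_sub_trunc_mul_trunc [CommRing R] {f g : R⟦X⟧} (hfg : f * g = 1) (n : ℕ) :
    Polynomial.X ^ n ∣ 1 - trunc n f * trunc n g := by
  refine Polynomial.X_pow_dvd_iff.mpr fun d hd => ?_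
  rw [Polynomial.coeff_sub, Polynomial.coeff_one, ← Polynomial.coeff_coe, Polynomial.coe_mul,
    ← coeff_mul_eq_coeff_trunc_mul_trunc f g hd, hfg, coeff_one, sub_self]

theorem natDegree_trunc_succ [Semiring R] {f : R⟦X⟧} {n : ℕ} (hf : coeff n f ≠ 0) :
    (trunc (n + 1) f).natDegree = n := by
  refine le_antisymm (Nat.lt_succ_iff.mp (natDegree_trunc_lt f n)) (le_natDegree_of_ne_zero ?_)
  rwa [coeff_trunc, if_pos n.lt_succ_self]

theorem natDegree_one_sub_trunc_mul_trunc [CommRing R] [NoZeroDivisors R] {f g : R⟦X⟧} {n : ℕ}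
    (hn : 0 < n) (hf : coeff n f ≠ 0) (hg : coeff n g ≠ 0) :
    (1 - trunc (n + 1) f * trunc (n + 1) g).natDegree = n + n := by
  have hf' := natDegree_trunc_succ hf
  have hg' := natDegree_trunc_succ hg
  have hprod : (trunc (n + 1) f * trunc (n + 1) g).natDegree = n + n := by
    rw [natDegree_mul (ne_zero_of_natDegree_gt (hf' ▸ hn)) (ne_zero_of_natDegree_gt (hg' ▸ hn)),
      hf', hg']
  rw [natDegree_sub_eq_right_of_natDegree_lt (by rw [natDegree_one, hprod]; omega), hprod]

theorem aeval_trunc [CommSemiring R] {A : Type*} [CommSemiring A] [Algebra R A]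
    (f : R⟦X⟧) (n : ℕ) (a : A) :
    Polynomial.aeval a (trunc n f) = ∑ i ∈ Finset.range n, algebraMap R A (coeff i f) * a ^ i := by
  rw [aeval_def, eval₂_trunc_eq_sum_range]

end PowerSeries

open PowerSeries in
noncomputable def expPoly (k : ℕ) : ℚ[X] := trunc k (exp ℚ)

open PowerSeries in
noncomputable def expNegPoly (k : ℕ) : ℚ[X] := trunc k (evalNegHom (exp ℚ))

noncomputable def gPoly (k : ℕ) : ℚ[X] :=
  (C (k ! : ℚ) * (1 - expPoly k * expNegPoly k)) /ₘ X ^ k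

theorem X_pow_mul_gPoly (k : ℕ) :
    X ^ k * gPoly k = C (k ! : ℚ) * (1 - expPoly k * expNegPoly k) := by
  have hdvd : X ^ k ∣ C (k ! : ℚ) * (1 - expPoly k * expNegPoly k) := dvd_mul_of_dvd_right
    (PowerSeries.X_pow_dvd_one_sub_trunc_mul_trunc PowerSeries.exp_mul_exp_neg_eq_one k)
    (C (k ! : ℚ))
  have hmod := (modByMonic_eq_zero_iff_dvd (monic_X_pow k)).mpr hdvd
  rw [gPoly, ← zero_add (X ^ k * _), ← hmod, modByMonic_add_div]

theorem natDegree_gPoly {k : ℕ} (hk : 2 ≤ k) : (gPoly k).natDegree = k - 2 := by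
  open PowerSeries in
  have hprod := natDegree_one_sub_trunc_mul_trunc (f := exp ℚ) (g := evalNegHom (exp ℚ))
    (n := k - 1) (by omega) (by simp [coeff_exp, Nat.factorial_ne_zero])
    (by simp [evalNegHom, coeff_rescale, coeff_exp, Nat.factorial_ne_zero])
  rw [Nat.sub_add_cancel (by omega)] at hprod
  rw [gPoly, natDegree_divByMonic _ (monic_X_pow k), natDegree_C_mul (by positivity), expPoly,
    expNegPoly, hprod, natDegree_X_pow]
  omega

section Evaluation

variable {K : Type*} [Field K] [Algebra ℚ K]

theorem aeval_expPoly (k : ℕ) (z : K) : aeval z (expPoly k) = expPartial k z := by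
  simp only [expPoly, PowerSeries.aeval_trunc, PowerSeries.coeff_exp, expPartial]
  refine Finset.sum_congr rfl fun r _ => ?_
  rw [Algebra.algebraMap_self, RingHom.id_apply, one_div, map_inv₀, map_natCast, div_eq_inv_mul]

theorem aeval_expNegPoly (k : ℕ) (z : K) : aeval z (expNegPoly k) = expPartial k (-z) := by
  simp only [expNegPoly, PowerSeries.aeval_trunc, PowerSeries.evalNegHom, PowerSeries.coeff_rescale,
    PowerSeries.coeff_exp, expPartial]
  refine Finset.sum_congr rfl fun r _ => ?_
  rw [Algebra.algebraMap_self, RingHom.id_apply, map_mul, map_pow, map_neg, map_one, one_div,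
    map_inv₀, map_natCast, neg_pow, div_eq_mul_inv]
  ring

theorem pow_mul_aeval_gPoly (k : ℕ) (z : K) :
    z ^ k * aeval z (gPoly k) = k ! * (1 - expPartial k z * expPartial k (-z)) := by
  simpa only [map_mul, map_pow, aeval_X, map_sub, map_one, aeval_expPoly, aeval_expNegPoly,
    map_natCast] using congrArg (aeval z) (X_pow_mul_gPoly k)

theorem expPartial_mul_expPartial_neg [CharZero K] (k : ℕ) (z : K) :
    expPartial k z * expPartial k (-z) = 1 - z ^ k * aeval z (gPoly k) / k ! := by
  rw [pow_mul_aeval_gPoly, mul_div_cancel_left₀ _ (Nat.cast_ne_zero.mpr k.factorial_ne_zero)]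
  ring

end Evaluation

section Ordered

variable {K : Type*} [Field K] [LinearOrder K] [IsStrictOrderedRing K]

theorem expPartial_pos {k : ℕ} (hk : 0 < k) {z : K} (hz : 0 ≤ z) : 0 < expPartial k z :=
  Finset.sum_pos' (fun r _ => by positivity) ⟨0, Finset.mem_range.mpr hk, by simp⟩

theorem one_div_expPartial [Algebra ℚ K] {k : ℕ} (hk : 0 < k) {z : K} (hz : 0 ≤ z) :
    1 / expPartial k z = expPartial k (-z) + z ^ k * aeval z (gPoly k) / (k ! * expPartial k z) := by
  have hne : expPartial k z ≠ 0 := (expPartial_pos hk hz).ne'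
  field_simp
  linear_combination -pow_mul_aeval_gPoly k z

end Ordered

theorem gPoly_eq_of_eval {k : ℕ} {p : ℚ[X]}
    (h : ∀ x : ℚ, x ^ k * p.eval x = k ! * (1 - expPartial k x * expPartial k (-x))) :
    gPoly k = p := by
  refine mul_left_cancel₀ (pow_ne_zero k X_ne_zero) (Polynomial.funext fun x => ?_)
  rw [eval_mul, eval_mul, eval_pow, eval_X, h, ← coe_aeval_eq_eval, pow_mul_aeval_gPoly]

theorem gPoly_two : gPoly 2 = C 2 :=
  gPoly_eq_of_eval fun x => by simp [expPartial, Finset.sum_range_succ, Nat.factorial]; ring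

theorem gPoly_three : gPoly 3 = C (-(3/2)) * X :=
  gPoly_eq_of_eval fun x => by simp [expPartial, Finset.sum_range_succ, Nat.factorial]; ring

theorem gPoly_four : gPoly 4 = C 2 + C (2/3) * X ^ 2 :=
  gPoly_eq_of_eval fun x => by simp [expPartial, Finset.sum_range_succ, Nat.factorial]; ring

theorem gPoly_five : gPoly 5 = C (-(5/3)) * X + C (-(5/24)) * X ^ 3 :=
  gPoly_eq_of_eval fun x => by simp [expPartial, Finset.sum_range_succ, Nat.factorial]; ring

theorem gPoly_six : gPoly 6 = C 2 + C (3/4) * X ^ 2 + C (1/20) * X ^ 4 :=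
  gPoly_eq_of_eval fun x => by simp [expPartial, Finset.sum_range_succ, Nat.factorial]; ring

theorem exists_gk (k : ℕ) (hk : 2 ≤ k) :
    ∃ g : Polynomial ℚ, g.natDegree = k - 2 ∧
      (∀ z : ℂ, expPartial k z * expPartial k (-z) = 1 - z ^ k * aeval z g / k !) ∧
      (∀ z : ℝ, 0 ≤ z →
        1 / expPartial k z = expPartial k (-z) + z ^ k * aeval z g / (k ! * expPartial k z)) ∧
      (k = 2 → g = C 2) ∧
      (k = 3 → g = C (-(3/2)) * X) ∧
      (k = 4 → g = C 2 + C (2/3) * X ^ 2) ∧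
      (k = 5 → g = C (-(5/3)) * X + C (-(5/24)) * X ^ 3) ∧
      (k = 6 → g = C 2 + C (3/4) * X ^ 2 + C (1/20) * X ^ 4) := by
  refine ⟨gPoly k, natDegree_gPoly hk, expPartial_mul_expPartial_neg k,
    fun z hz => one_div_expPartial (by omega) hz, ?_, ?_, ?_, ?_, ?_⟩ <;> rintro rfl
  exacts [gPoly_two, gPoly_three, gPoly_four, gPoly_five, gPoly_six]
end

section
/- For all integers m ≥ 1 and p ≥ 2 and every real x ≥ 0, the series Σ_{k=0}^∞ (−1)^{k−1} x^k/(k!·ζ(mk+p)) and Σ_{n=1}^∞ (μ(n)/n^p)·(1 − e^{−x/n^m}) both converge absolutely, and Σ_{k=0}^∞ (−1)^{k−1} x^k/(k!·ζ(mk+p)) = Σ_{n=1}^∞ (μ(n)/n^p)·(1 − e^{−x/n^m}) − 1/ζ(p). -/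
/-!
Expand `1 / ζ(mk + p) = ∑ μ(n) / n ^ (mk + p)`. The double series
`∑_{k,n} (-1)^(k+1) x^k μ(n) / (k! n^(mk+p))` converges absolutely, being dominated termwise by
`(|x|^k / k!) · n^(-p)`. Summing it over `n` first gives the Riesz series; summing over `k`
first gives `∑ μ(n)/n^p · (-e^(-x/n^m))`, which is `∑ μ(n)/n^p · (1 - e^(-x/n^m)) - 1/ζ(p)`.
-/

open scoped Nat ArithmeticFunction ArithmeticFunction.Moebius

theorem Summable.norm_tsum_prod {β γ E : Type*} [SeminormedAddCommGroup E]
    {f : β × γ → E} (hf : Summable fun q => ‖f q‖) :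
    Summable fun b => ‖∑' c, f (b, c)‖ := by
  have h := (summable_prod_of_nonneg fun q => norm_nonneg (f q)).mp hf
  exact h.2.of_nonneg_of_le (fun b => norm_nonneg _) fun b => norm_tsum_le_tsum_norm (h.1 b)

open scoped LSeries.notation in
theorem hasSum_moebius_div_pow {s : ℕ} (hs : 2 ≤ s) :
    HasSum (fun n : ℕ => (μ (n + 1) : ℂ) / ((n : ℂ) + 1) ^ s) (1 / riemannZeta s) := by
  have hre : 1 < (s : ℂ).re := by norm_cast
  have hL : LSeriesHasSum ↗μ s (1 / riemannZeta s) :=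
    LSeriesHasSum_iff.mpr ⟨ArithmeticFunction.LSeriesSummable_moebius_iff.mpr hre,
      eq_one_div_of_mul_eq_one_right <|
        LSeries_one_eq_riemannZeta hre ▸ LSeries_one_mul_Lseries_moebius hre⟩
  have hterm (n : ℕ) : LSeries.term ↗μ s (n + 1) = (μ (n + 1) : ℂ) / ((n : ℂ) + 1) ^ s := by
    rw [LSeries.term_of_ne_zero n.succ_ne_zero, Complex.cpow_natCast]
    push_cast
    rfl
  simpa only [Finset.range_one, Finset.sum_singleton, LSeries.term_zero, sub_zero, hterm]
    using (hasSum_nat_add_iff' 1).mpr hL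

theorem hasSum_neg_pow_succ_mul_pow_div_factorial (y : ℂ) :
    HasSum (fun k : ℕ => (-1 : ℂ) ^ (k + 1) * y ^ k / k !) (-Complex.exp (-y)) := by
  rw [Complex.exp_eq_exp_ℂ]
  refine (NormedSpace.expSeries_div_hasSum_exp (-y)).neg.congr_fun fun k => ?_
  rw [neg_pow, pow_succ]
  ring

/-- The `(k, n + 1)` term of the double series, arranged so that its sum over `k` is visibly an
exponential series. -/
noncomputable def rieszMoebiusTerm (m p : ℕ) (z : ℂ) (k n : ℕ) : ℂ :=
  (-1) ^ (k + 1) * (z / ((n : ℂ) + 1) ^ m) ^ k / k ! * ((μ (n + 1) : ℂ) / ((n : ℂ) + 1) ^ p)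

section rieszMoebiusTerm

variable (m p : ℕ) (z : ℂ)

theorem rieszMoebiusTerm_eq (k n : ℕ) : rieszMoebiusTerm m p z k n =
    (-1) ^ (k + 1) * z ^ k / k ! * ((μ (n + 1) : ℂ) / ((n : ℂ) + 1) ^ (m * k + p)) := by
  rw [rieszMoebiusTerm, div_pow, ← pow_mul, pow_add]
  field_simp
  ring

theorem hasSum_rieszMoebiusTerm_riemannZeta (hp : 2 ≤ p) (k : ℕ) :
    HasSum (fun n => rieszMoebiusTerm m p z k n)
      ((-1) ^ (k + 1) * z ^ k / (k ! * riemannZeta (m * k + p))) := by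
  have h := (hasSum_moebius_div_pow (s := m * k + p) (by omega)).mul_left
    ((-1) ^ (k + 1) * z ^ k / k !)
  rw [mul_one_div, div_div] at h
  push_cast at h
  simpa only [rieszMoebiusTerm_eq] using h

theorem hasSum_rieszMoebiusTerm_exp (n : ℕ) :
    HasSum (fun k => rieszMoebiusTerm m p z k n)
      ((μ (n + 1) : ℂ) / ((n : ℂ) + 1) ^ p * -Complex.exp (-z / ((n : ℂ) + 1) ^ m)) := by
  rw [neg_div, mul_comm]
  exact (hasSum_neg_pow_succ_mul_pow_div_factorial _).mul_right _

theorem norm_rieszMoebiusTerm_le (k n : ℕ) :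
    ‖rieszMoebiusTerm m p z k n‖ ≤ ‖z ^ k / k ! * ((μ (n + 1) : ℂ) / ((n : ℂ) + 1) ^ p)‖ := by
  have hge : 1 ≤ ‖((n : ℂ) + 1) ^ m‖ := by
    rw [norm_pow]
    exact one_le_pow₀ (by norm_cast; simp)
  have h : rieszMoebiusTerm m p z k n = (-1) ^ (k + 1) *
      (z ^ k / k ! * ((μ (n + 1) : ℂ) / ((n : ℂ) + 1) ^ p)) / (((n : ℂ) + 1) ^ m) ^ k := by
    rw [rieszMoebiusTerm]
    ring
  rw [h, norm_div, norm_mul, norm_pow, norm_pow, norm_neg, norm_one, one_pow, one_mul]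
  exact div_le_self (norm_nonneg _) (one_le_pow₀ hge)

theorem summable_norm_rieszMoebiusTerm (hp : 2 ≤ p) :
    Summable fun q : ℕ × ℕ => ‖rieszMoebiusTerm m p z q.1 q.2‖ := by
  have h : Summable fun q : ℕ × ℕ =>
      ‖z ^ q.1 / q.1 ! * ((μ (q.2 + 1) : ℂ) / ((q.2 : ℂ) + 1) ^ p)‖ :=
    Summable.mul_norm (f := fun k : ℕ => z ^ k / (k ! : ℂ))
      (g := fun n : ℕ => (μ (n + 1) : ℂ) / ((n : ℂ) + 1) ^ p)
      (NormedSpace.norm_expSeries_div_summable z)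
      (summable_norm_iff.mpr (hasSum_moebius_div_pow hp).summable)
  exact h.of_nonneg_of_le (fun _ => norm_nonneg _) fun q => norm_rieszMoebiusTerm_le m p z q.1 q.2

end rieszMoebiusTerm

theorem riesz_series_eq_moebius_series_general (m p : ℕ) (hp : 2 ≤ p)
    (x : ℝ) :
    Summable (fun k : ℕ =>
      ‖(-1 : ℂ) ^ (k + 1) * (x : ℂ) ^ k / (k ! * riemannZeta (m * k + p))‖) ∧
    Summable (fun n : ℕ =>
      ‖(μ (n + 1) : ℂ) / ((n : ℂ) + 1) ^ p *
        (1 - Complex.exp (-(x : ℂ) / ((n : ℂ) + 1) ^ m))‖) ∧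
    ∑' k : ℕ, (-1 : ℂ) ^ (k + 1) * (x : ℂ) ^ k / (k ! * riemannZeta (m * k + p)) =
      (∑' n : ℕ, (μ (n + 1) : ℂ) / ((n : ℂ) + 1) ^ p *
        (1 - Complex.exp (-(x : ℂ) / ((n : ℂ) + 1) ^ m))) - 1 / riemannZeta p := by
  have hF := summable_norm_rieszMoebiusTerm m p x hp
  have hrow k := (hasSum_rieszMoebiusTerm_riemannZeta m p x hp k).tsum_eq
  have hcol : Summable fun n => ‖∑' k, rieszMoebiusTerm m p x k n‖ :=
    hF.prod_symm.norm_tsum_prod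
  have hμ := hasSum_moebius_div_pow hp
  have hG (n : ℕ) : (μ (n + 1) : ℂ) / ((n : ℂ) + 1) ^ p *
      (1 - Complex.exp (-(x : ℂ) / ((n : ℂ) + 1) ^ m)) =
      (μ (n + 1) : ℂ) / ((n : ℂ) + 1) ^ p + ∑' k, rieszMoebiusTerm m p x k n := by
    rw [(hasSum_rieszMoebiusTerm_exp m p x n).tsum_eq]
    ring
  refine ⟨?_, ?_, ?_⟩
  · simpa only [hrow] using hF.norm_tsum_prod
  · exact .of_nonneg_of_le (fun _ => norm_nonneg _) (fun n => hG n ▸ norm_add_le _ _)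
      ((summable_norm_iff.mpr hμ.summable).add hcol)
  · calc _ = ∑' k, ∑' n, rieszMoebiusTerm m p x k n := by simp only [hrow]
      _ = ∑' n, ∑' k, rieszMoebiusTerm m p x k n :=
        (Summable.of_norm (f := Function.uncurry (rieszMoebiusTerm m p x)) hF).tsum_comm.symm
      _ = _ := by
        rw [tsum_congr hG, hμ.summable.tsum_add hcol.of_norm, hμ.tsum_eq]
        ring

theorem riesz_series_eq_moebius_series (m p : ℕ) (hm : 1 ≤ m) (hp : 2 ≤ p)
    (x : ℝ) (hx : 0 ≤ x) :
    Summable (fun k : ℕ =>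
      ‖(-1 : ℂ) ^ (k + 1) * (x : ℂ) ^ k / (k ! * riemannZeta (m * k + p))‖) ∧
    Summable (fun n : ℕ =>
      ‖(μ (n + 1) : ℂ) / ((n : ℂ) + 1) ^ p *
        (1 - Complex.exp (-(x : ℂ) / ((n : ℂ) + 1) ^ m))‖) ∧
    ∑' k : ℕ, (-1 : ℂ) ^ (k + 1) * (x : ℂ) ^ k / (k ! * riemannZeta (m * k + p)) =
      (∑' n : ℕ, (μ (n + 1) : ℂ) / ((n : ℂ) + 1) ^ p *
        (1 - Complex.exp (-(x : ℂ) / ((n : ℂ) + 1) ^ m))) - 1 / riemannZeta p :=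
  riesz_series_eq_moebius_series_general m p hp x
end

section
/- For every real x ≥ 0, the series Σ_{k=1}^∞ (−1)^{k−1} x^k/(k!·ζ(2k+1)) and Σ_{n=1}^∞ (μ(n)/n)·(1 − e^{−x/n²}) both converge absolutely and are equal: Σ_{k=1}^∞ (−1)^{k−1} x^k/(k!·ζ(2k+1)) = Σ_{n=1}^∞ (μ(n)/n)·(1 − e^{−x/n²}). -/
/-!
Expanding `1 - exp (-x / n²)` as a power series and `1 / ζ(2k+3)` as the Dirichlet series
`∑ μ(n) / n^(2k+3)` writes both sides as iterated sums of the same double series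
`(-1)^k x^(k+1) / (k+1)! · μ(n) / n^(2k+3)`. Since `|μ| ≤ 1`, its terms are bounded by the product
`|x|^(k+1) / (k+1)! · 1 / n²` of two summable sequences, so the double series converges
absolutely and the order of summation can be exchanged.
-/

open scoped Nat ArithmeticFunction ArithmeticFunction.Moebius
open ArithmeticFunction

theorem Summable.norm_tsum_of_summable_norm {β γ E : Type*} [NormedAddCommGroup E]
    [CompleteSpace E] {f : β × γ → E} (h : Summable fun p => ‖f p‖) :
    Summable fun b => ‖∑' c, f (b, c)‖ :=
  h.prod.of_nonneg_of_le (fun _ => norm_nonneg _)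
    fun b => norm_tsum_le_tsum_norm (h.prod_factor b)

theorem hasSum_neg_one_pow_mul_pow_succ_div_factorial (t : ℂ) :
    HasSum (fun k : ℕ => (-1) ^ k * t ^ (k + 1) / (k + 1)!) (1 - Complex.exp (-t)) := by
  have h := ((hasSum_nat_add_iff' 1).mpr (NormedSpace.expSeries_div_hasSum_exp (-t))).neg
  rw [← Complex.exp_eq_exp_ℂ, Finset.sum_range_one, pow_zero, Nat.factorial_zero, Nat.cast_one,
    div_one, neg_sub] at h
  refine h.congr_fun fun k => ?_
  ring

theorem tsum_moebius_div_pow_eq_inv_riemannZeta {s : ℕ} (hs : 1 < s) :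
    ∑' n : ℕ, (μ (n + 1) : ℂ) / ((n : ℂ) + 1) ^ s = (riemannZeta s)⁻¹ := by
  have hs' : 1 < (s : ℂ).re := by simpa using hs
  have h := (hasSum_nat_add_iff' 1).mpr (LSeriesSummable_moebius_iff.mpr hs').LSeriesHasSum
  rw [inv_eq_of_mul_eq_one_right
    (LSeries_zeta_eq_riemannZeta hs' ▸ LSeries_zeta_mul_Lseries_moebius hs')]
  convert h.tsum_eq using 1
  · refine tsum_congr fun n => ?_
    rw [LSeries.term_of_ne_zero n.succ_ne_zero]
    push_cast
    rw [Complex.cpow_natCast]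
  · simp

noncomputable def hardyLittlewoodTerm (z : ℂ) (p : ℕ × ℕ) : ℂ :=
  (-1) ^ p.1 * z ^ (p.1 + 1) / (p.1 + 1)! *
    ((μ (p.2 + 1) : ℂ) / ((p.2 : ℂ) + 1) ^ (2 * p.1 + 3))

theorem norm_hardyLittlewoodTerm_le (z : ℂ) (k n : ℕ) :
    ‖hardyLittlewoodTerm z (k, n)‖ ≤ ‖z‖ ^ (k + 1) / (k + 1)! * (1 / ((n : ℝ) + 1) ^ 2) := by
  have hμ : ‖(μ (n + 1) : ℂ)‖ ≤ 1 := by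
    rw [Complex.norm_intCast]
    exact_mod_cast abs_moebius_le_one
  have hn : ‖(n : ℂ) + 1‖ = (n : ℝ) + 1 := by exact_mod_cast Complex.norm_natCast (n + 1)
  have hn1 : (1 : ℝ) ≤ (n : ℝ) + 1 := by simp
  simp only [hardyLittlewoodTerm, norm_mul, norm_div, norm_pow, norm_neg, norm_one, one_pow,
    one_mul, Complex.norm_natCast, hn]
  gcongr
  omega

theorem summable_norm_hardyLittlewoodTerm (z : ℂ) :
    Summable fun p => ‖hardyLittlewoodTerm z p‖ := by
  have hexp : Summable fun k : ℕ => ‖z‖ ^ (k + 1) / (k + 1)! := by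
    exact_mod_cast (summable_nat_add_iff 1).mpr (Real.summable_pow_div_factorial ‖z‖)
  have hsq : Summable fun n : ℕ => 1 / ((n : ℝ) + 1) ^ 2 := by
    exact_mod_cast (summable_nat_add_iff 1).mpr (Real.summable_one_div_nat_pow.mpr one_lt_two)
  exact .of_nonneg_of_le (fun _ => norm_nonneg _) (fun p => norm_hardyLittlewoodTerm_le z p.1 p.2)
    (hexp.mul_of_nonneg hsq (fun _ => by positivity) fun _ => by positivity)

theorem tsum_hardyLittlewoodTerm_snd (z : ℂ) (k : ℕ) :
    ∑' n, hardyLittlewoodTerm z (k, n) =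
      (-1) ^ k * z ^ (k + 1) / ((k + 1)! * riemannZeta (2 * k + 3)) := by
  have hζ := tsum_moebius_div_pow_eq_inv_riemannZeta (s := 2 * k + 3) (by omega)
  push_cast at hζ
  simp only [hardyLittlewoodTerm]
  rw [tsum_mul_left, hζ, ← div_eq_mul_inv, div_div]

theorem tsum_hardyLittlewoodTerm_fst (z : ℂ) (n : ℕ) :
    ∑' k, hardyLittlewoodTerm z (k, n) =
      (μ (n + 1) : ℂ) / ((n : ℂ) + 1) * (1 - Complex.exp (-z / ((n : ℂ) + 1) ^ 2)) := by
  have hn : (n : ℂ) + 1 ≠ 0 := n.cast_add_one_ne_zero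
  rw [neg_div, ← (hasSum_neg_one_pow_mul_pow_succ_div_factorial _).tsum_eq, ← tsum_mul_left]
  refine tsum_congr fun k => ?_
  rw [hardyLittlewoodTerm, div_pow, ← pow_mul]
  field_simp
  ring

theorem hardy_littlewood_series_eq_moebius_series_general (x : ℝ) :
    Summable (fun k : ℕ =>
      ‖(-1 : ℂ) ^ k * (x : ℂ) ^ (k + 1) / ((k + 1)! * riemannZeta (2 * k + 3))‖) ∧
    Summable (fun n : ℕ =>
      ‖(μ (n + 1) : ℂ) / ((n : ℂ) + 1) *
        (1 - Complex.exp (-(x : ℂ) / ((n : ℂ) + 1) ^ 2))‖) ∧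
    ∑' k : ℕ, (-1 : ℂ) ^ k * (x : ℂ) ^ (k + 1) / ((k + 1)! * riemannZeta (2 * k + 3)) =
      ∑' n : ℕ, (μ (n + 1) : ℂ) / ((n : ℂ) + 1) *
        (1 - Complex.exp (-(x : ℂ) / ((n : ℂ) + 1) ^ 2)) := by
  have h := summable_norm_hardyLittlewoodTerm x
  simp only [← tsum_hardyLittlewoodTerm_snd, ← tsum_hardyLittlewoodTerm_fst]
  refine ⟨h.norm_tsum_of_summable_norm, h.prod_symm.norm_tsum_of_summable_norm, ?_⟩
  exact (h.of_norm.tsum_comm (f := fun k n => hardyLittlewoodTerm x (k, n))).symm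

theorem hardy_littlewood_series_eq_moebius_series (x : ℝ) (hx : 0 ≤ x) :
    Summable (fun k : ℕ =>
      ‖(-1 : ℂ) ^ k * (x : ℂ) ^ (k + 1) / ((k + 1)! * riemannZeta (2 * k + 3))‖) ∧
    Summable (fun n : ℕ =>
      ‖(μ (n + 1) : ℂ) / ((n : ℂ) + 1) *
        (1 - Complex.exp (-(x : ℂ) / ((n : ℂ) + 1) ^ 2))‖) ∧
    ∑' k : ℕ, (-1 : ℂ) ^ k * (x : ℂ) ^ (k + 1) / ((k + 1)! * riemannZeta (2 * k + 3)) =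
      ∑' n : ℕ, (μ (n + 1) : ℂ) / ((n : ℂ) + 1) *
        (1 - Complex.exp (-(x : ℂ) / ((n : ℂ) + 1) ^ 2)) :=
  hardy_littlewood_series_eq_moebius_series_general x
end

section
/- Let m ≥ 1 and p ≥ 2 be integers, let x > 0 be real, and let c be a real number with 0 < c < (p−1)/m. Then the generalised Riesz function admits the Mellin–Barnes integral representation S_{m,p}(x) = −(1/(2π)) ∫_{−∞}^{∞} Γ(c+it)·x^{−(c+it)} / ζ(p − m(c+it)) dt, the integral converging absolutely (for Re(s) = c one has Re(p − ms) = p − mc > 1, so ζ(p − ms) ≠ 0). -/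
/-!
Both sides equal `-∑ₙ μ(n) n⁻ᵖ e^{-x/nᵐ}`. On the line `Re s = c` one has `Re (p - m s) > 1`, so
`1/ζ(p - m s) = ∑ₙ μ(n) n^{m s - p}` converges absolutely, uniformly in `t`. Integrating term by
term and using `n^{m s} x^{-s} = (x/nᵐ)^{-s}`, the `n`-th term is Mellin inversion for `e^{-y}`,
`(1/2π) ∫ Γ(c + it) y^{-(c + it)} dt = e^{-y}`, at `y = x/nᵐ`. On the series side, expanding
`1/ζ(m k + p)` the same way and summing over `k` first gives the exponential series of `-x/nᵐ`.
The bound `‖Γ(c + it)‖ (1 + t²) ≤ Γ(c) + Γ(c + 2)`, from `Γ(s + 2) = s (s + 1) Γ(s)`, makes the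
vertical integrals absolutely convergent.
-/

open scoped Nat
open MeasureTheory Complex

namespace Complex

lemma norm_Gamma_le_Gamma_re {s : ℂ} (hs : 0 < s.re) : ‖Gamma s‖ ≤ Real.Gamma s.re := by
  rw [Gamma_eq_integral hs, GammaIntegral, Real.Gamma_eq_integral hs]
  refine (norm_integral_le_integral_norm _).trans_eq (setIntegral_congr_fun measurableSet_Ioi
    fun x (hx : 0 < x) => ?_)
  rw [norm_mul, norm_real, Real.norm_of_nonneg (Real.exp_nonneg _), norm_cpow_eq_rpow_re_of_pos hx]
  simp

lemma norm_Gamma_mul_one_add_sq_im_le {s : ℂ} (hs : 0 < s.re) :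
    ‖Gamma s‖ * (1 + s.im ^ 2) ≤ Real.Gamma s.re + Real.Gamma (s.re + 2) := by
  have hs0 : s ≠ 0 := ne_of_apply_ne re (by rw [zero_re]; exact hs.ne')
  have hs1 : s + 1 ≠ 0 := ne_of_apply_ne re (by rw [add_re, one_re, zero_re]; linarith)
  have hshift : ‖Gamma (s + 2)‖ = ‖s + 1‖ * ‖s‖ * ‖Gamma s‖ := by
    rw [show s + 2 = s + 1 + 1 by ring, Gamma_add_one _ hs1, Gamma_add_one _ hs0, norm_mul,
      norm_mul, mul_assoc]
  have hupper : ‖Gamma (s + 2)‖ ≤ Real.Gamma (s.re + 2) := by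
    simpa using norm_Gamma_le_Gamma_re (s := s + 2) (by simp; linarith)
  have him_sq : s.im ^ 2 ≤ ‖s + 1‖ * ‖s‖ := by
    rw [← sq_abs]
    calc |s.im| ^ 2 = |(s + 1).im| * |s.im| := by simp [sq]
      _ ≤ ‖s + 1‖ * ‖s‖ := mul_le_mul (abs_im_le_norm _) (abs_im_le_norm _) (abs_nonneg _)
          (norm_nonneg _)
  nlinarith [norm_Gamma_le_Gamma_re hs, norm_nonneg (Gamma s)]

lemma continuous_Gamma_vertical {c : ℝ} (hc : 0 < c) :
    Continuous fun t : ℝ => Gamma (c + t * I) := by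
  refine continuous_iff_continuousAt.mpr fun t =>
    (differentiableAt_Gamma _ fun n h => ?_).continuousAt.comp (by fun_prop)
  have hre := congrArg re h
  simp only [add_re, ofReal_re, mul_re, I_re, mul_zero, ofReal_im, I_im, mul_one, sub_self,
    add_zero, neg_re, natCast_re] at hre
  linarith [n.cast_nonneg (α := ℝ)]

lemma integrable_Gamma_vertical {c : ℝ} (hc : 0 < c) :
    Integrable fun t : ℝ => Gamma (c + t * I) := by
  refine (integrable_inv_one_add_sq.const_mul (Real.Gamma c + Real.Gamma (c + 2))).mono'
    (continuous_Gamma_vertical hc).aestronglyMeasurable (.of_forall fun t => ?_)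
  rw [← div_eq_mul_inv, le_div_iff₀ (by positivity)]
  simpa using norm_Gamma_mul_one_add_sq_im_le (s := c + t * I) (by simpa using hc)

lemma integrable_Gamma_mul_exp_vertical {c : ℝ} (hc : 0 < c) (w : ℝ) :
    Integrable fun t : ℝ => Gamma (c + t * I) * exp (-(c + t * I) * w) := by
  refine (integrable_Gamma_vertical hc).mul_bdd (c := Real.exp (-c * w)) (by fun_prop)
    (.of_forall fun t => ?_)
  simp [norm_exp]

lemma integral_Gamma_mul_exp_vertical {c : ℝ} (hc : 0 < c) {y : ℝ} (hy : 0 < y) :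
    ∫ t : ℝ, Gamma (c + t * I) * exp (-(c + t * I) * Real.log y) =
      2 * Real.pi * Real.exp (-y) := by
  have hconv : MellinConvergent (fun u : ℝ => (Real.exp (-u) : ℂ)) c := by
    simpa [MellinConvergent, mul_comm] using GammaIntegral_convergent (s := c) (by simpa using hc)
  have hmellin : VerticalIntegrable (mellin fun u : ℝ => (Real.exp (-u) : ℂ)) c := by
    rw [← GammaIntegral_eq_mellin]
    exact (integrable_Gamma_vertical hc).congr
      (.of_forall fun t => Gamma_eq_integral (by simpa using hc))
  have hinv := mellinInv_mellin_eq c _ hy hconv hmellin (by fun_prop)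
  rw [← GammaIntegral_eq_mellin, mellinInv] at hinv
  have hintegrand : ∀ t : ℝ, (y : ℂ) ^ (-(c + t * I)) • GammaIntegral (c + t * I) =
      Gamma (c + t * I) * exp (-(c + t * I) * Real.log y) := fun t => by
    rw [smul_eq_mul, ← Gamma_eq_integral (by simpa using hc),
      cpow_def_of_ne_zero (by simpa using hy.ne'), ← ofReal_log hy.le, mul_comm _ (-(c + t * I)),
      mul_comm]
  simp_rw [hintegrand] at hinv
  have hpi : (2 * Real.pi : ℂ) ≠ 0 := by exact_mod_cast Real.two_pi_pos.ne'
  rw [← hinv, real_smul, ← mul_assoc]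
  push_cast
  rw [mul_one_div_cancel hpi, one_mul]

end Complex

open scoped LSeries.notation ArithmeticFunction.Moebius

namespace LSeries

lemma norm_term_eq_of_re_eq (f : ℕ → ℂ) {s : ℂ} {σ : ℝ} (h : s.re = σ) (n : ℕ) :
    ‖term f s n‖ = ‖term f σ n‖ := by
  simp only [norm_term_eq, h, ofReal_re]

lemma continuous_term_comp {α : Type*} [TopologicalSpace α] (f : ℕ → ℂ) {w : α → ℂ}
    (hw : Continuous w) (n : ℕ) : Continuous fun a => term f (w a) n := by
  rcases eq_or_ne n 0 with rfl | hn
  · simpa only [term_zero] using continuous_const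
  · simp only [term_of_ne_zero hn]
    have hn' : (n : ℂ) ≠ 0 := by exact_mod_cast hn
    exact continuous_const.div (hw.const_cpow (.inl hn')) fun a => by
      simp [cpow_eq_zero_iff, hn']

lemma term_natCast_add (f : ℕ → ℂ) (k : ℕ) (s : ℂ) (n : ℕ) :
    term f (k + s) n = term f s n / n ^ k := by
  rcases eq_or_ne n 0 with rfl | hn
  · simp
  · have hn' : (n : ℂ) ≠ 0 := by exact_mod_cast hn
    rw [term_of_ne_zero hn, term_of_ne_zero hn, cpow_add _ _ hn', cpow_natCast, div_div, mul_comm]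

lemma term_sub_mul_mul_exp_neg_mul_log (f : ℕ → ℂ) (s z : ℂ) (m n : ℕ) {x : ℝ} (hx : 0 < x) :
    term f (s - m * z) n * exp (-z * Real.log x) =
      term f s n * exp (-z * Real.log (x / n ^ m)) := by
  rcases eq_or_ne n 0 with rfl | hn
  · simp
  · have hn' : (n : ℂ) ≠ 0 := by exact_mod_cast hn
    have hlog : Real.log (x / n ^ m) = Real.log x - m * Real.log n := by
      rw [Real.log_div hx.ne' (by positivity), Real.log_pow]
    rw [hlog]
    simp only [term_of_ne_zero hn, cpow_def_of_ne_zero hn', div_eq_mul_inv, ← exp_neg,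
      mul_assoc, ← exp_add, ← natCast_log]
    congr 2
    push_cast
    ring

end LSeries

open LSeries

section VerticalLine

variable {f : ℕ → ℂ} {σ : ℝ} {g w : ℝ → ℂ}

lemma LSeriesSummable.continuous_LSeries_comp (hf : LSeriesSummable f σ) (hw : Continuous w)
    (hre : ∀ t, (w t).re = σ) : Continuous fun t => L f (w t) :=
  continuous_tsum (continuous_term_comp f hw) (summable_norm_iff.mpr hf)
    fun n t => (norm_term_eq_of_re_eq f (hre t) n).le

lemma LSeriesSummable.integrable_mul_LSeries_comp (hf : LSeriesSummable f σ) (hg : Integrable g)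
    (hw : Continuous w) (hre : ∀ t, (w t).re = σ) : Integrable fun t => g t * L f (w t) :=
  hg.mul_bdd (hf.continuous_LSeries_comp hw hre).aestronglyMeasurable (.of_forall fun t =>
    (norm_tsum_le_tsum_norm ((summable_norm_iff.mpr hf).congr fun n =>
      (norm_term_eq_of_re_eq f (hre t) n).symm)).trans_eq
    (tsum_congr fun n => norm_term_eq_of_re_eq f (hre t) n))

lemma LSeriesSummable.integral_mul_LSeries_comp (hf : LSeriesSummable f σ) (hg : Integrable g)
    (hw : Continuous w) (hre : ∀ t, (w t).re = σ) :
    ∫ t, g t * L f (w t) = ∑' n, ∫ t, g t * term f (w t) n := by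
  have hnorm : ∀ n t, ‖g t * term f (w t) n‖ = ‖term f σ n‖ * ‖g t‖ := fun n t => by
    rw [norm_mul, mul_comm, norm_term_eq_of_re_eq f (hre t)]
  simp_rw [LSeries, ← tsum_mul_left]
  refine (integral_tsum_of_summable_integral_norm (fun n => ?_) ?_).symm
  · exact hg.mul_bdd (continuous_term_comp f hw n).aestronglyMeasurable
      (.of_forall fun t => (norm_term_eq_of_re_eq f (hre t) n).le)
  · simp_rw [hnorm, integral_const_mul]
    exact (summable_norm_iff.mpr hf).mul_right _

end VerticalLine

lemma div_riemannZeta_eq_mul_LSeries_moebius {s : ℂ} (hs : 1 < s.re) (a : ℂ) :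
    a / riemannZeta s = a * L ↗μ s := by
  rw [div_eq_mul_inv, inv_eq_of_mul_eq_one_right
    (ArithmeticFunction.LSeries_zeta_eq_riemannZeta hs ▸
      ArithmeticFunction.LSeries_zeta_mul_Lseries_moebius hs)]

lemma tsum_pow_div_factorial_eq_exp (z : ℂ) : ∑' k : ℕ, z ^ k / k ! = exp z := by
  rw [exp_eq_exp_ℂ, NormedSpace.exp_eq_tsum_div]

lemma tsum_div_riemannZeta_eq_neg_tsum_moebius (m : ℕ) {p : ℂ} (hp : 1 < p.re) (x : ℂ) :
    ∑' k : ℕ, (-1 : ℂ) ^ (k + 1) * x ^ k / (k ! * riemannZeta (m * k + p)) =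
      -∑' n : ℕ, term ↗μ p n * exp (-(x / n ^ m)) := by
  have hre : ∀ k : ℕ, p.re ≤ ((m : ℂ) * k + p).re := fun k => by
    simp only [add_re, mul_re, natCast_re, natCast_im, mul_zero, sub_zero, le_add_iff_nonneg_left]
    positivity
  set F : ℕ → ℕ → ℂ := fun k n => (-1) ^ (k + 1) * x ^ k / k ! * term ↗μ (m * k + p) n
  have hrow : ∀ k : ℕ, (-1 : ℂ) ^ (k + 1) * x ^ k / (k ! * riemannZeta (m * k + p)) =
      ∑' n, F k n := fun k => by
    rw [← div_div, div_riemannZeta_eq_mul_LSeries_moebius (hp.trans_le (hre k)), LSeries,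
      tsum_mul_left]
  have hcol : ∀ n : ℕ, ∑' k, F k n = -(term ↗μ p n * exp (-(x / n ^ m))) := fun n => by
    have hFk : ∀ k, F k n = -((-(x / n ^ m)) ^ k / k ! * term ↗μ p n) := fun k => by
      simp only [F]
      rw [show (m : ℂ) * k + p = ((m * k : ℕ) : ℂ) + p by push_cast; ring, term_natCast_add,
        neg_pow (x / _), div_pow, ← pow_mul, pow_succ]
      ring
    rw [tsum_congr hFk, tsum_neg, tsum_mul_right, tsum_pow_div_factorial_eq_exp, mul_comm]
  have hsum : Summable (Function.uncurry F) := by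
    refine .of_norm_bounded ((Real.summable_pow_div_factorial ‖x‖).mul_of_nonneg
      (summable_norm_iff.mpr (ArithmeticFunction.LSeriesSummable_moebius_iff.mpr hp))
      (fun k => by positivity) fun n => norm_nonneg _) fun ⟨k, n⟩ => ?_
    simp only [Function.uncurry, F, norm_mul, norm_div, norm_pow, norm_neg, norm_one, one_pow,
      one_mul, Complex.norm_natCast]
    gcongr
    exact norm_term_le_of_re_le_re _ (hre k) n
  rw [tsum_congr hrow, ← hsum.tsum_comm, tsum_congr hcol, tsum_neg]

section MellinBarnes

variable (m : ℕ) {p : ℂ} {c : ℝ}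

lemma integrable_Gamma_mul_exp_div_riemannZeta (hc : 0 < c) (hσ : 1 < p.re - m * c) (w : ℝ) :
    Integrable fun t : ℝ =>
      Gamma (c + t * I) * exp (-(c + t * I) * w) / riemannZeta (p - m * (c + t * I)) := by
  have hre : ∀ t : ℝ, (p - m * (c + t * I)).re = p.re - m * c := fun t => by simp
  simp_rw [div_riemannZeta_eq_mul_LSeries_moebius ((hσ.trans_eq (hre _).symm))]
  exact (ArithmeticFunction.LSeriesSummable_moebius_iff.mpr (by simpa using hσ))
    |>.integrable_mul_LSeries_comp (integrable_Gamma_mul_exp_vertical hc w) (by fun_prop) hre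

lemma integral_Gamma_mul_exp_div_riemannZeta (hc : 0 < c) (hσ : 1 < p.re - m * c) {x : ℝ}
    (hx : 0 < x) :
    ∫ t : ℝ, Gamma (c + t * I) * exp (-(c + t * I) * Real.log x) /
        riemannZeta (p - m * (c + t * I)) =
      2 * Real.pi * ∑' n : ℕ, term ↗μ p n * exp (-(x / n ^ m)) := by
  have hre : ∀ t : ℝ, (p - m * (c + t * I)).re = p.re - m * c := fun t => by simp
  simp_rw [div_riemannZeta_eq_mul_LSeries_moebius ((hσ.trans_eq (hre _).symm))]
  rw [(ArithmeticFunction.LSeriesSummable_moebius_iff.mpr (by simpa using hσ))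
    |>.integral_mul_LSeries_comp (integrable_Gamma_mul_exp_vertical hc _) (by fun_prop) hre,
    ← tsum_mul_left]
  refine tsum_congr fun n => ?_
  have hterm : ∀ t : ℝ, Gamma (c + t * I) * exp (-(c + t * I) * Real.log x) *
      term ↗μ (p - m * (c + t * I)) n =
        term ↗μ p n * (Gamma (c + t * I) * exp (-(c + t * I) * Real.log (x / n ^ m))) :=
      fun t => by
    rw [mul_assoc, mul_comm (exp _), term_sub_mul_mul_exp_neg_mul_log _ _ _ _ _ hx]
    ring
  simp_rw [hterm, integral_const_mul]
  rcases eq_or_ne n 0 with rfl | hn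
  · simp
  · rw [integral_Gamma_mul_exp_vertical hc (by positivity : 0 < x / n ^ m)]
    push_cast
    ring

end MellinBarnes

lemma lt_sub_mul_of_lt_div {a b c d : ℝ} (hb : 0 ≤ b) (hc : 0 < c) (h : c < (a - d) / b) :
    d < a - b * c := by
  rcases hb.eq_or_lt with rfl | hb
  · rw [div_zero] at h; linarith
  · rw [lt_div_iff₀ hb] at h; linarith

theorem riesz_mellin_barnes_general (m p : ℕ)
    (x : ℝ) (hx : 0 < x) (c : ℝ) (hc0 : 0 < c) (hc1 : c < ((p : ℝ) - 1) / m) :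
    Integrable (fun t : ℝ =>
      Complex.Gamma ((c : ℂ) + t * I) *
        Complex.exp (-((c : ℂ) + t * I) * (Real.log x : ℂ)) /
          riemannZeta ((p : ℂ) - m * ((c : ℂ) + t * I))) ∧
    ∑' k : ℕ, (-1 : ℂ) ^ (k + 1) * (x : ℂ) ^ k / (k ! * riemannZeta (m * k + p)) =
      -(1 / (2 * Real.pi)) *
        ∫ t : ℝ, Complex.Gamma ((c : ℂ) + t * I) *
          Complex.exp (-((c : ℂ) + t * I) * (Real.log x : ℂ)) /
            riemannZeta ((p : ℂ) - m * ((c : ℂ) + t * I)) := by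
  have hσ : 1 < (p : ℂ).re - m * c := by simpa using lt_sub_mul_of_lt_div m.cast_nonneg hc0 hc1
  have hp : 1 < (p : ℂ).re := hσ.trans_le (sub_le_self _ (by positivity))
  refine ⟨integrable_Gamma_mul_exp_div_riemannZeta m hc0 hσ _, ?_⟩
  rw [tsum_div_riemannZeta_eq_neg_tsum_moebius m hp,
    integral_Gamma_mul_exp_div_riemannZeta m hc0 hσ hx]
  field_simp

theorem riesz_mellin_barnes (m p : ℕ) (hm : 1 ≤ m) (hp : 2 ≤ p)
    (x : ℝ) (hx : 0 < x) (c : ℝ) (hc0 : 0 < c) (hc1 : c < ((p : ℝ) - 1) / m) :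
    Integrable (fun t : ℝ =>
      Complex.Gamma ((c : ℂ) + t * I) *
        Complex.exp (-((c : ℂ) + t * I) * (Real.log x : ℂ)) /
          riemannZeta ((p : ℂ) - m * ((c : ℂ) + t * I))) ∧
    ∑' k : ℕ, (-1 : ℂ) ^ (k + 1) * (x : ℂ) ^ k / (k ! * riemannZeta (m * k + p)) =
      -(1 / (2 * Real.pi)) *
        ∫ t : ℝ, Complex.Gamma ((c : ℂ) + t * I) *
          Complex.exp (-((c : ℂ) + t * I) * (Real.log x : ℂ)) /
            riemannZeta ((p : ℂ) - m * ((c : ℂ) + t * I)) :=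
  riesz_mellin_barnes_general m p x hx c hc0 hc1
end
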